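/- arXiv:2305.15600 — 7 statements merged into one kernel-verified Lean document; each statement's English description precedes it below -/
import Mathlib

section
/- If A and B are matroids on the same ground set and every flat of B is a flat of A (i.e., there is a strong map A → B), then every independent set of B is an independent set of A (i.e., there is a weak map A → B). -/
/-!
Closure in `A` is dominated by closure in `B`: the `B`-closure of `X` is a `B`-flat, hence an
`A`-flat containing `X`, so it contains the `A`-closure of `X`. An independent set of `B` has no
element in the `B`-closure of the others, hence none in their `A`-closure, so it is `A`-independent.
-/

open Set

namespace Matroid

variable {α : Type*} {A B : Matroid α}

lemma ground_subset_of_forall_isFlat (h : ∀ F, B.IsFlat F → A.IsFlat F) : B.E ⊆ A.E :=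
  (h _ B.ground_isFlat).subset_ground

lemma closure_subset_closure_of_forall_isFlat (h : ∀ F, B.IsFlat F → A.IsFlat F) {X : Set α}
    (hX : X ⊆ B.E) : A.closure X ⊆ B.closure X :=
  (h _ (B.isFlat_closure X)).closure ▸ A.closure_subset_closure (B.subset_closure X hX)

end Matroid

open Matroid

theorem stmt2_general {α : Type*} (A B : Matroid α)
    (hstrong : ∀ F : Set α, B.IsFlat F → A.IsFlat F) :
    ∀ I : Set α, B.Indep I → A.Indep I := by
  intro I hI
  rw [indep_iff_forall_notMem_closure_sdiff
    (hI.subset_ground.trans (ground_subset_of_forall_isFlat hstrong))]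
  intro e he heA
  exact hI.notMem_closure_sdiff_of_mem he
    (closure_subset_closure_of_forall_isFlat hstrong (sdiff_subset.trans hI.subset_ground) heA)

/-- If `A` and `B` are matroids on the same ground set and every
flat of `B` is a flat of `A` (a strong map `A → B`), then every independent
set of `B` is independent in `A` (a weak map `A → B`). -/
theorem stmt2 {α : Type*} (A B : Matroid α) [A.Finite] [B.Finite]
    (hE : A.E = B.E) (hstrong : ∀ F : Set α, B.IsFlat F → A.IsFlat F) :
    ∀ I : Set α, B.Indep I → A.Indep I :=
  stmt2_general A B hstrong
end

section
/- If A → B is a rank-preserving weak map of matroids (rk(A) = rk(B)), then the closure map φ_B restricted to flats of A is surjective onto flats of B; moreover it is surjective by rank: for every flat F of B there is a flat G of A with φ_B(G) = F and rk_A(G) = rk_B(F). -/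
/-!
Given a flat `F` of `B`, take a `B`-basis `I` of `F`. It is `A`-independent, so `G := cl_A(I)`
is a flat of `A` of `A`-rank `|I| = rk_B(F)`. A dependency of `insert x I` in `A` is one in `B`,
so `cl_A(I) ⊆ cl_B(I)`, and hence `cl_B(G) = cl_B(I) = F`.
-/

/-- The rank of a set `X` in a matroid `M`: the maximum size of an independent
subset of `X`. -/
noncomputable def mrk {α : Type*} (M : Matroid α) (X : Set α) : ℕ :=
  sSup {n | ∃ I, M.Indep I ∧ I ⊆ X ∧ I.ncard = n}

namespace Matroid

variable {α : Type*}

lemma mrk_eq_ncard_of_isBasis' {M : Matroid α} [M.RankFinite] {I X : Set α}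
    (h : M.IsBasis' I X) : mrk M X = I.ncard := by
  refine IsGreatest.csSup_eq ⟨⟨I, h.indep, h.subset, rfl⟩, ?_⟩
  rintro _ ⟨J, hJ, hJX, rfl⟩
  have hJI : J.encard ≤ I.encard := h.encard_eq_eRk ▸ hJ.encard_le_eRk_of_subset hJX
  exact ENat.toNat_le_toNat hJI h.indep.finite.encard_lt_top.ne

lemma Indep.closure_subset_closure_of_weakMap {A B : Matroid α} (hE : A.E = B.E)
    (hweak : ∀ I, B.Indep I → A.Indep I) {I : Set α} (hI : B.Indep I) :
    A.closure I ⊆ B.closure I := by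
  intro x hx
  rw [hI.mem_closure_iff]
  rcases (hweak I hI).mem_closure_iff.mp hx with hdep | hxI
  · refine .inl (B.dep_of_not_indep (fun hind ↦ hdep.not_indep (hweak _ hind)) ?_)
    exact hE ▸ hdep.subset_ground
  · exact .inr hxI

lemma Indep.closure_closure_eq_of_weakMap {A B : Matroid α} (hE : A.E = B.E)
    (hweak : ∀ I, B.Indep I → A.Indep I) {I : Set α} (hI : B.Indep I) :
    B.closure (A.closure I) = B.closure I :=
  (B.closure_subset_closure_of_subset_closure
    (hI.closure_subset_closure_of_weakMap hE hweak)).antisymm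
    (B.closure_subset_closure (A.subset_closure I (hweak I hI).subset_ground))

end Matroid

open Matroid in
theorem stmt5_general {α : Type*} (A B : Matroid α) [A.Finite] [B.Finite]
    (hE : A.E = B.E) (hweak : ∀ I : Set α, B.Indep I → A.Indep I) :
    (∀ F : Set α, B.IsFlat F → ∃ G : Set α, A.IsFlat G ∧ B.closure G = F) ∧
    (∀ F : Set α, B.IsFlat F →
      ∃ G : Set α, A.IsFlat G ∧ B.closure G = F ∧ mrk A G = mrk B F) := by
  have hsurj : ∀ F : Set α, B.IsFlat F →
      ∃ G : Set α, A.IsFlat G ∧ B.closure G = F ∧ mrk A G = mrk B F := by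
    intro F hF
    obtain ⟨I, hI⟩ := B.exists_isBasis F
    refine ⟨A.closure I, isFlat_closure I, ?_, ?_⟩
    · rw [hI.indep.closure_closure_eq_of_weakMap hE hweak, hI.closure_eq_closure, hF.closure]
    · rw [mrk_eq_ncard_of_isBasis' (hweak I hI.indep).isBasis_closure.isBasis',
        mrk_eq_ncard_of_isBasis' hI.isBasis']
  exact ⟨fun F hF ↦ (hsurj F hF).imp fun _ hG ↦ ⟨hG.1, hG.2.1⟩, hsurj⟩

/-- If `A → B` is a rank-preserving weak map of matroids, then
`φ_B` restricted to flats of `A` is surjective onto flats of `B`, and moreover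
surjective by rank: every flat `F` of `B` is `φ_B(G)` for some flat `G` of `A`
with `rk_A(G) = rk_B(F)`. -/
theorem stmt5 {α : Type*} (A B : Matroid α) [A.Finite] [B.Finite]
    (hE : A.E = B.E) (hweak : ∀ I : Set α, B.Indep I → A.Indep I)
    (hrk : mrk A A.E = mrk B B.E) :
    (∀ F : Set α, B.IsFlat F → ∃ G : Set α, A.IsFlat G ∧ B.closure G = F) ∧
    (∀ F : Set α, B.IsFlat F →
      ∃ G : Set α, A.IsFlat G ∧ B.closure G = F ∧ mrk A G = mrk B F) :=
  stmt5_general A B hE hweak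
end

section
/- If A → B is a rank-preserving weak map of matroids of rank r+1, then for every subset S ⊆ [r], the flag f-number f_S of the lattice of flats of A is at least the flag f-number f_S of the lattice of flats of B. -/
/-- A chain of flats of `M` lying strictly between the minimal flat and the
ground set, totally ordered by inclusion. -/
def IsFlatChain {α : Type*} (M : Matroid α) (C : Set (Set α)) : Prop :=
  (∀ F ∈ C, M.IsFlat F ∧ F ≠ M.closure ∅ ∧ F ≠ M.E) ∧ IsChain (· ⊆ ·) C

/-- The flag `f`-number `f_S(M)`: the number of chains of (proper, nontrivial)
flats of `M` whose set of ranks is exactly `S`. -/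
noncomputable def flagF {α : Type*} (M : Matroid α) (S : Set ℕ) : ℕ :=
  {C : Set (Set α) | IsFlatChain M C ∧ (fun F => mrk M F) '' C = S}.ncard

/-!
Given a chain of flats `F₁ ⊂ ⋯ ⊂ Fₖ` of `B`, choose one `B`-independent set `I`
such that every `I ∩ Fᵢ` is a basis of `Fᵢ`, and send the chain to
`cl_A(I ∩ F₁) ⊆ ⋯ ⊆ cl_A(I ∩ Fₖ)`. Since `B`-independent sets are `A`-independent,
`cl_A(I ∩ Fᵢ)` is a flat of `A` of rank `|I ∩ Fᵢ| = rk_B(Fᵢ)`, so the image is a chain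
of flats of `A` with the same set of ranks. The map is injective: if `J, J'` are
`B`-bases of flats `F, F'` with `cl_A(J) = cl_A(J')`, then no `x ∈ J' \ F` exists,
since `J + x` would be `B`-independent, hence `A`-independent, while `x ∈ cl_A(J)`;
so `F' ⊆ F` and symmetrically `F ⊆ F'`.
-/

open Set

theorem IsChain.sUnion_mem {α : Type*} {C : Set (Set α)} (hchain : IsChain (· ⊆ ·) C)
    (hfin : C.Finite) (hne : C.Nonempty) : ⋃₀ C ∈ C := by
  have hsup : SupClosed C := fun F hF G hG => by
    rcases hchain.total hF hG with h | h
    · rwa [sup_eq_right.2 h]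
    · rwa [sup_eq_left.2 h]
  exact hsup.sSup_mem_of_nonempty hfin hne Subset.rfl

namespace Matroid

variable {α : Type*} {M A B : Matroid α} {C : Set (Set α)} {I J J' F F' X : Set α}

theorem exists_indep_forall_inter_isBasis_of_isChain (hfin : C.Finite)
    (hchain : IsChain (· ⊆ ·) C) (hCE : ∀ F ∈ C, F ⊆ M.E) :
    ∃ I ⊆ ⋃₀ C, M.Indep I ∧ ∀ F ∈ C, M.IsBasis (I ∩ F) F := by
  induction h : C.ncard generalizing C with
  | zero =>
    obtain rfl : C = ∅ := (ncard_eq_zero hfin).1 h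
    exact ⟨∅, empty_subset _, M.empty_indep, by simp⟩
  | succ n ih =>
    have hT : ⋃₀ C ∈ C := hchain.sUnion_mem hfin (nonempty_of_ncard_ne_zero (by omega))
    obtain ⟨J, hJC, hJ, hJF⟩ := ih hfin.sdiff (hchain.mono sdiff_subset)
      (fun F hF => hCE F hF.1) (by rw [ncard_sdiff_singleton_of_mem hT, h]; rfl)
    obtain ⟨I, hI, hJI⟩ := hJ.subset_isBasis_of_subset (hJC.trans (sUnion_mono sdiff_subset))
      (hCE _ hT)
    refine ⟨I, hI.subset, hI.indep, fun F hF => ?_⟩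
    obtain rfl | hFT := eq_or_ne F (⋃₀ C)
    · rwa [inter_eq_left.2 hI.subset]
    have hJF := hJF F ⟨hF, hFT⟩
    rwa [← hJF.eq_of_subset_indep (hI.indep.subset inter_subset_left)
      (inter_subset_inter_left F hJI) inter_subset_right]

theorem IsBasis.mrk_eq_ncard [M.RankFinite] (hIX : M.IsBasis I X) : mrk M X = I.ncard := by
  refine IsGreatest.csSup_eq ⟨⟨I, hIX.indep, hIX.subset, rfl⟩, ?_⟩
  rintro _ ⟨J, hJ, hJX, rfl⟩
  have hle : J.encard ≤ I.encard :=
    (hJ.encard_le_eRk_of_subset hJX).trans_eq hIX.encard_eq_eRk.symm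
  exact ENat.toNat_le_toNat hle hIX.indep.finite.encard_lt_top.ne

theorem mrk_closure_eq_of_isBasis [A.RankFinite] [B.RankFinite]
    (hweak : ∀ I, B.Indep I → A.Indep I) (hJ : B.IsBasis J F) :
    mrk A (A.closure J) = mrk B F := by
  rw [(hweak J hJ.indep).isBasis_closure.mrk_eq_ncard, hJ.mrk_eq_ncard]

theorem isFlat_subset_of_closure_subset_closure (hweak : ∀ I, B.Indep I → A.Indep I)
    (hF : B.IsFlat F) (hJ : B.IsBasis J F) (hJ' : B.IsBasis J' F')
    (h : A.closure J' ⊆ A.closure J) : F' ⊆ F := by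
  have hJ'F : J' ⊆ F := by
    intro x hxJ'
    by_contra hxF
    have hxJ : x ∉ J := fun hx => hxF (hJ.subset hx)
    have hBins : B.Indep (insert x J) := by
      rw [hJ.indep.insert_indep_iff_of_notMem hxJ, hJ.closure_eq_closure, hF.closure]
      exact ⟨hJ'.indep.subset_ground hxJ', hxF⟩
    have hxcl : x ∈ A.closure J :=
      h (A.subset_closure J' (hweak J' hJ'.indep).subset_ground hxJ')
    exact (((hweak J hJ.indep).insert_indep_iff_of_notMem hxJ).1 (hweak _ hBins)).2 hxcl
  calc F' ⊆ B.closure J' := hJ'.subset_closure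
    _ ⊆ B.closure F := B.closure_subset_closure hJ'F
    _ = F := hF.closure

theorem isFlat_eq_of_closure_eq_closure (hweak : ∀ I, B.Indep I → A.Indep I)
    (hF : B.IsFlat F) (hF' : B.IsFlat F')
    (hJ : B.IsBasis J F) (hJ' : B.IsBasis J' F') (h : A.closure J = A.closure J') : F = F' :=
  (isFlat_subset_of_closure_subset_closure hweak hF' hJ' hJ h.subset).antisymm
    (isFlat_subset_of_closure_subset_closure hweak hF hJ hJ' h.symm.subset)

end Matroid

namespace IsFlatChain

open Matroid

variable {α : Type*} {M A B : Matroid α} {C : Set (Set α)} {I : Set α}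

theorem finite [M.Finite] (hC : IsFlatChain M C) : C.Finite :=
  M.ground_finite.finite_subsets.subset fun F hF => (hC.1 F hF).1.subset_ground

theorem image_closure [A.RankFinite] [B.RankFinite]
    (hweak : ∀ I, B.Indep I → A.Indep I) (hC : IsFlatChain B C)
    (hI : ∀ F ∈ C, B.IsBasis (I ∩ F) F)
    (hrk : ∀ F ∈ C, 0 < mrk B F ∧ mrk B F < mrk A A.E) :
    IsFlatChain A ((fun F => A.closure (I ∩ F)) '' C) := by
  refine ⟨?_, Monotone.isChain_image (fun F G hFG => A.closure_subset_closure
    (inter_subset_inter_right I hFG)) hC.2⟩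
  rintro _ ⟨F, hF, rfl⟩
  have hrkF := mrk_closure_eq_of_isBasis hweak (hI F hF)
  refine ⟨A.isFlat_closure _, fun (h : A.closure (I ∩ F) = _) => ?_,
    fun (h : A.closure (I ∩ F) = _) => ?_⟩
  · rw [h, A.empty_indep.isBasis_closure.mrk_eq_ncard, ncard_empty] at hrkF
    exact (hrk F hF).1.ne hrkF
  · rw [h] at hrkF
    exact (hrk F hF).2.ne' hrkF

end IsFlatChain

open Matroid

theorem stmt7_general {α : Type*} (A B : Matroid α) [A.Finite] [B.Finite] {r : ℕ}
    (hweak : ∀ I : Set α, B.Indep I → A.Indep I)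
    (hrkA : mrk A A.E = r + 1)
    (S : Set ℕ) (hS : S ⊆ Set.Icc 1 r) :
    flagF B S ≤ flagF A S := by
  have hbases (C : Set (Set α)) (hC : IsFlatChain B C) :
      ∃ I ⊆ ⋃₀ C, B.Indep I ∧ ∀ F ∈ C, B.IsBasis (I ∩ F) F :=
    exists_indep_forall_inter_isBasis_of_isChain hC.finite hC.2
      fun F hF => (hC.1 F hF).1.subset_ground
  choose! I _ _ hI using hbases
  set φ : Set (Set α) → Set (Set α) := fun C => (fun F => A.closure (I C ∩ F)) '' C
  have hφ_reflects (C C') (hC : IsFlatChain B C) (hC' : IsFlatChain B C') (h : φ C ⊆ φ C') :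
      C ⊆ C' := by
    intro F hF
    obtain ⟨F', hF', hFF'⟩ := h ⟨F, hF, rfl⟩
    rwa [← isFlat_eq_of_closure_eq_closure hweak (hC'.1 F' hF').1 (hC.1 F hF).1
      (hI C' hC' F' hF') (hI C hC F hF) hFF']
  refine ncard_le_ncard_of_injOn φ ?_ ?_ ?_
  · rintro C ⟨hC, rfl⟩
    have hrk (F) (hF : F ∈ C) : 0 < mrk B F ∧ mrk B F < mrk A A.E := by
      obtain ⟨hlo, hhi⟩ : 1 ≤ mrk B F ∧ mrk B F ≤ r := hS ⟨F, hF, rfl⟩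
      omega
    refine ⟨hC.image_closure hweak (hI C hC) hrk, ?_⟩
    simp only [φ, image_image]
    exact image_congr fun F hF => mrk_closure_eq_of_isBasis hweak (hI C hC F hF)
  · exact fun C hC C' hC' h =>
      (hφ_reflects C C' hC.1 hC'.1 h.subset).antisymm (hφ_reflects C' C hC'.1 hC.1 h.symm.subset)
  · exact A.ground_finite.finite_subsets.finite_subsets.subset fun C hC F hF =>
      (hC.1.1 F hF).1.subset_ground

/-- If `A → B` is a rank-preserving weak map of matroids of rank
`r+1`, then for every `S ⊆ [r]`, the flag `f`-number `f_S` of the lattice of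
flats of `A` is at least that of `B`. -/
theorem stmt7 {α : Type*} (A B : Matroid α) [A.Finite] [B.Finite] {r : ℕ}
    (hE : A.E = B.E) (hweak : ∀ I : Set α, B.Indep I → A.Indep I)
    (hrkA : mrk A A.E = r + 1) (hrkB : mrk B B.E = r + 1)
    (S : Set ℕ) (hS : S ⊆ Set.Icc 1 r) :
    flagF B S ≤ flagF A S :=
  stmt7_general A B hweak hrkA S hS
end

section
/- If A → B is a rank-preserving weak map of matroids, then for every k, the h-number h_k of the independence complex of A is at least h_k of the independence complex of B. -/
/-- `f_i` of the independence complex of `M`: the number of independent sets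
of cardinality `i`. -/
noncomputable def fInd {α : Type*} (M : Matroid α) (i : ℕ) : ℕ :=
  {I : Set α | M.Indep I ∧ I.ncard = i}.ncard

/-- `h_k` of the independence complex of `M`, a complex of dimension `r − 1`
where `r = rk(M)`, via `h_k = ∑_{i ≤ k} (−1)^{k−i} C(r−i, k−i) f_i`. -/
noncomputable def hInd {α : Type*} (M : Matroid α) (k : ℕ) : ℤ :=
  ∑ i ∈ Finset.range (k + 1),
    (-1 : ℤ) ^ (k - i) * (Nat.choose (mrk M M.E - i) (k - i)) * (fInd M i)

/-!
The polynomial `H(M) = ∑_{I independent} (X - 1) ^ (r - |I|) = ∑_k h_k X ^ (r - k)` satisfies a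
deletion–contraction recursion: `H(M) = H(M ＼ e) + H(M ／ e)` if `e` is neither a loop nor a
coloop, `H(M) = X * H(M ＼ e)` if `e` is a coloop, and deleting a loop does not change `H(M)`.
In particular its coefficients are nonnegative.

For a rank-preserving weak map `M → N`, pick `e` that is not a coloop of `N` (if there is none,
`N` is free and `M = N`). Then `e` is not a coloop of `M` either, since bases of `N` are bases of
`M`, so deleting `e` and, when `e` is a nonloop of both, contracting it gives again rank-preserving
weak maps; when `e` is a loop of `N` but not of `M`, the extra term `H(M ／ e)` is nonnegative.
Induction on the size of the ground set then compares the coefficients.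
-/

open Set Polynomial Finset

namespace Matroid

variable {α : Type*} {M N : Matroid α} {I B : Set α} {e : α}

section Rank

variable [M.RankFinite]

lemma IsBase.ncard_eq_mrk (hB : M.IsBase B) : B.ncard = mrk M M.E := by
  have hbdd : ∀ n ∈ {n | ∃ I, M.Indep I ∧ I ⊆ M.E ∧ I.ncard = n}, n ≤ B.ncard := by
    rintro _ ⟨I, hI, -, rfl⟩
    obtain ⟨B', hB', hIB'⟩ := hI.exists_isBase_superset
    exact (ncard_le_ncard hIB' hB'.finite).trans (hB'.ncard_eq_ncard_of_isBase hB).le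
  exact le_antisymm (le_csSup ⟨_, hbdd⟩ ⟨B, hB.indep, hB.subset_ground, rfl⟩)
    (csSup_le ⟨_, B, hB.indep, hB.subset_ground, rfl⟩ hbdd)

lemma Indep.ncard_le_mrk (hI : M.Indep I) : I.ncard ≤ mrk M M.E := by
  obtain ⟨B, hB, hIB⟩ := hI.exists_isBase_superset
  exact hB.ncard_eq_mrk ▸ ncard_le_ncard hIB hB.finite

lemma Indep.isBase_of_mrk_le_ncard (hI : M.Indep I) (h : mrk M M.E ≤ I.ncard) : M.IsBase I := by
  obtain ⟨B, hB, hIB⟩ := hI.exists_isBase_superset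
  rwa [eq_of_subset_of_ncard_le hIB (hB.ncard_eq_mrk ▸ h) hB.finite]

lemma mrk_delete_of_not_isColoop (he : ¬ M.IsColoop e) :
    mrk (M ＼ {e}) (M ＼ {e}).E = mrk M M.E := by
  obtain ⟨B, hB, heB⟩ : ∃ B, M.IsBase B ∧ e ∉ B := by
    simpa [isColoop_iff_forall_mem_isBase] using he
  have hBdel : (M ＼ {e}).IsBase B := delete_isBase_iff.2 <|
    hB.isBasis_ground.isBasis_subset (subset_sdiff_singleton hB.subset_ground heB) sdiff_subset
  rw [← hBdel.ncard_eq_mrk, hB.ncard_eq_mrk]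

lemma mrk_contract_add_one (he : M.IsNonloop e) :
    mrk (M ／ {e}) (M ／ {e}).E + 1 = mrk M M.E := by
  obtain ⟨B, hB, heB⟩ := he.exists_mem_isBase
  have hBcon : (M ／ {e}).IsBase (B \ {e}) := by
    rw [he.indep.contract_isBase_iff, sdiff_union_self, union_singleton, insert_eq_of_mem heB]
    exact ⟨hB, disjoint_sdiff_left⟩
  rw [← hBcon.ncard_eq_mrk, ← hB.ncard_eq_mrk, ncard_sdiff_singleton_add_one heB hB.finite]

lemma mrk_delete_add_one_of_isColoop (he : M.IsColoop e) :
    mrk (M ＼ {e}) (M ＼ {e}).E + 1 = mrk M M.E := by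
  rw [← contract_eq_delete_of_subset_coloops (singleton_subset_iff.2 he)]
  exact mrk_contract_add_one he.isNonloop

end Rank

lemma mrk_ground_congr (h : ∀ I, M.Indep I ↔ N.Indep I) : mrk M M.E = mrk N N.E := by
  have hground (I : Set α) : M.Indep I ∧ I ⊆ M.E ↔ N.Indep I ∧ I ⊆ N.E :=
    ⟨fun hI ↦ ⟨(h I).1 hI.1, ((h I).1 hI.1).subset_ground⟩,
      fun hI ↦ ⟨(h I).2 hI.1, ((h I).2 hI.1).subset_ground⟩⟩
  simp only [mrk, ← and_assoc, hground]

section HPolynomial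

variable [M.Finite]

noncomputable def indepSets (M : Matroid α) [M.Finite] : Finset (Set α) :=
  (M.ground_finite.finite_subsets.subset fun _ (hI : M.Indep _) ↦ hI.subset_ground).toFinset

@[simp] lemma mem_indepSets : I ∈ M.indepSets ↔ M.Indep I :=
  Set.Finite.mem_toFinset _

noncomputable def hPoly (M : Matroid α) [M.Finite] : ℤ[X] :=
  ∑ I ∈ M.indepSets, (X - 1) ^ (mrk M M.E - I.ncard)

lemma hPoly_congr [N.Finite] (h : ∀ I, M.Indep I ↔ N.Indep I) : M.hPoly = N.hPoly := by
  have hsets : M.indepSets = N.indepSets := by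
    ext I
    simp [h]
  rw [hPoly, hPoly, hsets, mrk_ground_congr h]

lemma hPoly_delete_of_not_isNonloop (he : ¬ M.IsNonloop e) : (M ＼ {e}).hPoly = M.hPoly :=
  hPoly_congr fun I ↦ by
    rw [delete_indep_iff, Set.disjoint_singleton_right, and_iff_left_iff_imp]
    exact fun hI heI ↦ he (hI.subset (singleton_subset_iff.2 heI)).isNonloop

lemma hPoly_eq_sum_delete_add_sum_contract (he : M.IsNonloop e) :
    M.hPoly = ∑ I ∈ (M ＼ {e}).indepSets, (X - 1) ^ (mrk M M.E - I.ncard)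
      + ∑ J ∈ (M ／ {e}).indepSets, (X - 1) ^ (mrk M M.E - (J.ncard + 1)) := by
  classical
  rw [hPoly, ← sum_filter_add_sum_filter_not _ (fun I ↦ e ∉ I)]
  congr 1
  · refine sum_congr ?_ fun _ _ ↦ rfl
    ext I
    simp [delete_indep_iff]
  · symm
    refine sum_nbij' (insert e) (· \ {e}) ?_ ?_ ?_ ?_ ?_ <;>
      simp +contextual [he.contractElem_indep_iff]
    exact fun J heJ hJ ↦ by rw [ncard_insert_of_notMem heJ (hJ.finite.subset (subset_insert e J))]

lemma hPoly_eq_delete_add_contract (he : M.IsNonloop e) (hc : ¬ M.IsColoop e) :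
    M.hPoly = (M ＼ {e}).hPoly + (M ／ {e}).hPoly := by
  rw [hPoly_eq_sum_delete_add_sum_contract he, hPoly, hPoly, mrk_delete_of_not_isColoop hc,
    ← mrk_contract_add_one he]
  congr 1
  refine sum_congr rfl fun J _ ↦ ?_
  rw [Nat.add_sub_add_right]

lemma hPoly_eq_X_mul_delete (he : M.IsColoop e) : M.hPoly = X * (M ＼ {e}).hPoly := by
  simp only [hPoly_eq_sum_delete_add_sum_contract he.isNonloop,
    contract_eq_delete_of_subset_coloops (singleton_subset_iff.2 he)]
  rw [hPoly, mul_sum, ← sum_add_distrib, ← mrk_delete_add_one_of_isColoop he]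
  refine sum_congr rfl fun J hJ ↦ ?_
  rw [Nat.add_sub_add_right, Nat.sub_add_comm (mem_indepSets.1 hJ).ncard_le_mrk]
  ring

lemma hPoly_of_ground_eq_empty (h : M.E = ∅) : M.hPoly = 1 := by
  have hind (I : Set α) : M.Indep I ↔ I = ∅ :=
    ⟨fun hI ↦ subset_empty_iff.1 (h ▸ hI.subset_ground), fun hI ↦ hI ▸ M.empty_indep⟩
  have hsets : M.indepSets = {∅} := by
    ext I
    simp [hind]
  obtain ⟨B, hB⟩ := M.exists_isBase
  rw [hPoly, hsets, sum_singleton, ← hB.ncard_eq_mrk, (hind B).1 hB.indep]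
  simp

lemma coeff_hPoly_nonneg (m : ℕ) : 0 ≤ M.hPoly.coeff m := by
  induction hn : M.E.ncard using Nat.strong_induction_on generalizing M m with
  | _ n ih =>
  obtain hE | ⟨e, he⟩ := M.E.eq_empty_or_nonempty
  · rw [hPoly_of_ground_eq_empty hE, coeff_one]
    split_ifs <;> norm_num
  have hlt : (M.E \ {e}).ncard < n := hn ▸ ncard_sdiff_singleton_lt_of_mem he M.ground_finite
  by_cases hnl : M.IsNonloop e
  · by_cases hc : M.IsColoop e
    · rw [hPoly_eq_X_mul_delete hc]
      cases m with
      | zero => simp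
      | succ m =>
        rw [coeff_X_mul]
        exact ih _ hlt (M := M ＼ {e}) m rfl
    · rw [hPoly_eq_delete_add_contract hnl hc, coeff_add]
      exact add_nonneg (ih _ hlt (M := M ＼ {e}) m rfl) (ih _ hlt (M := M ／ {e}) m rfl)
  · rw [← hPoly_delete_of_not_isNonloop hnl]
    exact ih _ hlt (M := M ＼ {e}) m rfl

lemma coeff_hPoly (m : ℕ) : M.hPoly.coeff m = ∑ I ∈ M.indepSets,
    (-1) ^ (mrk M M.E - I.ncard - m) * ((mrk M M.E - I.ncard).choose m : ℤ) := by
  rw [hPoly, finsetSum_coeff]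
  refine sum_congr rfl fun I _ ↦ ?_
  rw [sub_eq_add_neg, ← C_1, ← C_neg, coeff_X_add_C_pow]

lemma fInd_eq_card_filter (i : ℕ) : fInd M i = #{I ∈ M.indepSets | I.ncard = i} := by
  rw [fInd, ← ncard_coe_finset]
  congr
  ext I
  simp

lemma hInd_eq_sum (k : ℕ) : hInd M k = ∑ I ∈ M.indepSets with I.ncard ≤ k,
    (-1) ^ (k - I.ncard) * ((mrk M M.E - I.ncard).choose (k - I.ncard) : ℤ) := by
  have hfilter :
      {I ∈ M.indepSets | I.ncard ≤ k} = {I ∈ M.indepSets | I.ncard ∈ range (k + 1)} := by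
    simp
  rw [hfilter, ← sum_fiberwise_eq_sum_filter' M.indepSets (range (k + 1)) Set.ncard
    (fun i ↦ (-1) ^ (k - i) * ((mrk M M.E - i).choose (k - i) : ℤ)), hInd]
  simp only [fInd_eq_card_filter, sum_const, nsmul_eq_mul, mul_comm]

lemma hInd_eq_coeff_hPoly {k : ℕ} (hk : k ≤ mrk M M.E) :
    hInd M k = M.hPoly.coeff (mrk M M.E - k) := by
  rw [hInd_eq_sum, sum_filter, coeff_hPoly]
  refine sum_congr rfl fun I hI ↦ ?_
  have hIr := (mem_indepSets.1 hI).ncard_le_mrk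
  split_ifs with hIk
  · rw [show mrk M M.E - I.ncard - (mrk M M.E - k) = k - I.ncard by omega,
      Nat.choose_symm_of_eq_add (by omega : mrk M M.E - I.ncard = (k - I.ncard) + (mrk M M.E - k))]
  · rw [Nat.choose_eq_zero_of_lt (by omega), Nat.cast_zero, mul_zero]

lemma hInd_eq_zero {k : ℕ} (hk : mrk M M.E < k) : hInd M k = 0 := by
  rw [hInd_eq_sum]
  refine sum_eq_zero fun I hI ↦ ?_
  have hIr := (mem_indepSets.1 (mem_filter.1 hI).1).ncard_le_mrk
  rw [Nat.choose_eq_zero_of_lt (by omega), Nat.cast_zero, mul_zero]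

end HPolynomial

structure IsRankPreservingWeakMap (M N : Matroid α) : Prop where
  ground_eq : M.E = N.E
  indep_of_indep : ∀ I, N.Indep I → M.Indep I
  mrk_eq : mrk M M.E = mrk N N.E

namespace IsRankPreservingWeakMap

lemma isBase [M.RankFinite] [N.RankFinite] (h : IsRankPreservingWeakMap M N)
    (hB : N.IsBase B) : M.IsBase B :=
  (h.indep_of_indep B hB.indep).isBase_of_mrk_le_ncard (h.mrk_eq ▸ hB.ncard_eq_mrk.ge)

lemma isColoop [M.RankFinite] [N.RankFinite] (h : IsRankPreservingWeakMap M N)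
    (he : M.IsColoop e) : N.IsColoop e :=
  isColoop_iff_forall_mem_isBase.2 fun _ hB ↦ he.mem_of_isBase (h.isBase hB)

lemma eq_of_indep_ground (h : IsRankPreservingWeakMap M N) (hN : N.Indep N.E) : M = N :=
  ext_indep h.ground_eq fun I hI ↦
    ⟨fun _ ↦ hN.subset (h.ground_eq ▸ hI), h.indep_of_indep I⟩

lemma delete [M.RankFinite] [N.RankFinite] (h : IsRankPreservingWeakMap M N)
    (he : ¬ N.IsColoop e) : IsRankPreservingWeakMap (M ＼ {e}) (N ＼ {e}) where
  ground_eq := by rw [delete_ground, delete_ground, h.ground_eq]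
  indep_of_indep I hI := by
    rw [delete_indep_iff] at hI ⊢
    exact ⟨h.indep_of_indep I hI.1, hI.2⟩
  mrk_eq := by
    rw [mrk_delete_of_not_isColoop (mt h.isColoop he), mrk_delete_of_not_isColoop he, h.mrk_eq]

lemma contract [M.RankFinite] [N.RankFinite] (h : IsRankPreservingWeakMap M N)
    (hM : M.IsNonloop e) (hN : N.IsNonloop e) :
    IsRankPreservingWeakMap (M ／ {e}) (N ／ {e}) where
  ground_eq := by rw [contract_ground, contract_ground, h.ground_eq]
  indep_of_indep I hI := by
    rw [hN.contractElem_indep_iff] at hI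
    rw [hM.contractElem_indep_iff]
    exact ⟨hI.1, h.indep_of_indep _ hI.2⟩
  mrk_eq := by
    have := mrk_contract_add_one hM
    have := mrk_contract_add_one hN
    have := h.mrk_eq
    omega

lemma coeff_hPoly_le [M.Finite] [N.Finite] (h : IsRankPreservingWeakMap M N) (m : ℕ) :
    N.hPoly.coeff m ≤ M.hPoly.coeff m := by
  induction hn : M.E.ncard using Nat.strong_induction_on generalizing M N m with
  | _ n ih =>
  by_cases hfree : N.Indep N.E
  · obtain rfl := h.eq_of_indep_ground hfree
    exact le_rfl
  obtain ⟨e, he, hcN⟩ : ∃ e ∈ N.E, ¬ N.IsColoop e := by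
    obtain ⟨B, hB⟩ := N.exists_isBase
    obtain ⟨e, heE, heB⟩ := not_subset.1 fun hEB ↦ hfree (hB.indep.subset hEB)
    exact ⟨e, heE, fun hc ↦ heB (hc.mem_of_isBase hB)⟩
  have hlt : (M.E \ {e}).ncard < n :=
    hn ▸ ncard_sdiff_singleton_lt_of_mem (h.ground_eq ▸ he) M.ground_finite
  have hdel := ih _ hlt (h.delete hcN) m rfl
  by_cases hM : M.IsNonloop e
  · rw [hPoly_eq_delete_add_contract hM (mt h.isColoop hcN), coeff_add]
    by_cases hN : N.IsNonloop e
    · rw [hPoly_eq_delete_add_contract hN hcN, coeff_add]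
      exact add_le_add hdel (ih _ hlt (h.contract hM hN) m rfl)
    · rw [← hPoly_delete_of_not_isNonloop hN]
      exact le_add_of_le_of_nonneg hdel (coeff_hPoly_nonneg m)
  · have hN : ¬ N.IsNonloop e := fun hN ↦ hM (h.indep_of_indep _ hN.indep).isNonloop
    rwa [← hPoly_delete_of_not_isNonloop hM, ← hPoly_delete_of_not_isNonloop hN]

end IsRankPreservingWeakMap

end Matroid

/-- If `A → B` is a rank-preserving weak map of matroids, then for
every `k`, the `h`-number `h_k` of the independence complex of `A` is at least
`h_k` of the independence complex of `B`. -/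
theorem stmt9 {α : Type*} (A B : Matroid α) [A.Finite] [B.Finite]
    (hE : A.E = B.E) (hweak : ∀ I : Set α, B.Indep I → A.Indep I)
    (hrk : mrk A A.E = mrk B B.E) :
    ∀ k : ℕ, hInd B k ≤ hInd A k := by
  intro k
  have h : A.IsRankPreservingWeakMap B := ⟨hE, hweak, hrk⟩
  rcases le_or_gt k (mrk A A.E) with hk | hk
  · rw [Matroid.hInd_eq_coeff_hPoly hk, Matroid.hInd_eq_coeff_hPoly (hrk ▸ hk), hrk]
    exact h.coeff_hPoly_le _
  · rw [Matroid.hInd_eq_zero hk, Matroid.hInd_eq_zero (hrk ▸ hk)]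
end

section
/- Every weak map of matroids A → B can be decomposed as a strong map followed by a rank-preserving weak map: there exists a matroid C with a strong map A → C and a rank-preserving weak map C → B (or in the other order as appropriate). -/
open Set

namespace Matroid

variable {α : Type*} {M N : Matroid α} {I F : Set α} {k : ℕ}

def truncateTo (M : Matroid α) (k : ℕ) : Matroid α :=
  (IndepMatroid.ofBddAugment M.E (fun I ↦ M.Indep I ∧ I.encard ≤ k)
    ⟨M.empty_indep, by simp⟩
    (fun _ _ hJ hIJ ↦ ⟨hJ.1.subset hIJ, (encard_le_encard hIJ).trans hJ.2⟩)
    (fun I J hI hJ hIJ ↦ by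
      obtain ⟨e, he, hIe⟩ := hI.1.augment hJ.1 hIJ
      refine ⟨e, he.1, he.2, hIe, ?_⟩
      rw [encard_insert_of_notMem he.2]
      exact (Order.add_one_le_of_lt hIJ).trans hJ.2)
    ⟨k, fun _ hI ↦ hI.2⟩
    (fun _ hI ↦ hI.1.subset_ground)).matroid

@[simp] lemma truncateTo_ground : (M.truncateTo k).E = M.E := rfl

@[simp] lemma truncateTo_indep_iff : (M.truncateTo k).Indep I ↔ M.Indep I ∧ I.encard ≤ k := by
  simp [truncateTo]

instance truncateTo_rankFinite : (M.truncateTo k).RankFinite := by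
  obtain ⟨B, hB⟩ := (M.truncateTo k).exists_isBase
  exact ⟨B, hB, finite_of_encard_le_coe (truncateTo_indep_iff.1 hB.indep).2⟩

lemma eRank_truncateTo : (M.truncateTo k).eRank = min M.eRank k := by
  refine le_antisymm ?_ ?_
  · obtain ⟨B, hB⟩ := (M.truncateTo k).exists_isBase
    have hBM := truncateTo_indep_iff.1 hB.indep
    exact hB.encard_eq_eRank ▸ le_min hBM.1.encard_le_eRank hBM.2
  · obtain ⟨B, hB⟩ := M.exists_isBase
    obtain ⟨J, hJB, hJ⟩ :=
      exists_subset_encard_eq ((min_le_left _ _).trans hB.encard_eq_eRank.ge)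
    have hJt : (M.truncateTo k).Indep J :=
      truncateTo_indep_iff.2 ⟨hB.indep.subset hJB, hJ ▸ min_le_right _ _⟩
    exact hJ ▸ hJt.encard_le_eRank

lemma truncateTo_closure_eq_of_encard_lt (hI : M.Indep I) (hIk : I.encard < k) :
    (M.truncateTo k).closure I = M.closure I := by
  have hIt : (M.truncateTo k).Indep I := truncateTo_indep_iff.2 ⟨hI, hIk.le⟩
  ext e
  rw [hIt.mem_closure_iff', hI.mem_closure_iff', truncateTo_ground, truncateTo_indep_iff]
  refine and_congr_right fun _ ↦ ⟨fun h hIe ↦ ?_, fun h hIe ↦ h hIe.1⟩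
  by_contra heI
  exact heI (h ⟨hIe, by rw [encard_insert_of_notMem heI]; exact Order.add_one_le_of_lt hIk⟩)

lemma truncateTo_closure_eq_ground_of_encard_eq (hI : (M.truncateTo k).Indep I)
    (hIk : I.encard = k) : (M.truncateTo k).closure I = M.E := by
  refine (closure_subset_ground _ _).antisymm fun e he ↦ ?_
  rw [hI.mem_closure_iff', truncateTo_indep_iff]
  refine ⟨he, fun hIe ↦ ?_⟩
  by_contra heI
  have hcard := hIe.2
  rw [encard_insert_of_notMem heI, hIk] at hcard
  norm_cast at hcard
  omega

lemma IsFlat.of_truncateTo (hF : (M.truncateTo k).IsFlat F) : M.IsFlat F := by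
  obtain ⟨I, hI⟩ := (M.truncateTo k).exists_isBasis F hF.subset_ground
  have hIM := truncateTo_indep_iff.1 hI.indep
  rw [← hF.closure, ← hI.closure_eq_closure]
  obtain hIk | hIk := hIM.2.lt_or_eq
  · rw [truncateTo_closure_eq_of_encard_lt hIM.1 hIk]
    exact M.isFlat_closure I
  · rw [truncateTo_closure_eq_ground_of_encard_eq hI.indep hIk]
    exact M.ground_isFlat

lemma eRank_le_eRank_of_forall_indep (h : ∀ I, N.Indep I → M.Indep I) :
    N.eRank ≤ M.eRank := by
  obtain ⟨B, hB⟩ := N.exists_isBase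
  exact hB.encard_eq_eRank ▸ (h B hB.indep).encard_le_eRank

lemma rankFinite_of_forall_indep [M.RankFinite] (h : ∀ I, N.Indep I → M.Indep I) :
    N.RankFinite := by
  obtain ⟨B, hB⟩ := N.exists_isBase
  exact ⟨B, hB, (h B hB.indep).finite⟩

lemma cast_mrk_ground [M.RankFinite] : (mrk M M.E : ℕ∞) = M.eRank := by
  obtain ⟨B, hB⟩ := M.exists_isBase
  have hmax : IsGreatest {n | ∃ I, M.Indep I ∧ I ⊆ M.E ∧ I.ncard = n} B.ncard := by
    refine ⟨⟨B, hB.indep, hB.subset_ground, rfl⟩, ?_⟩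
    rintro _ ⟨I, hI, -, rfl⟩
    rw [← ENat.natCast_le_natCast, hI.finite.cast_ncard_eq, hB.finite.cast_ncard_eq,
      hB.encard_eq_eRank]
    exact hI.encard_le_eRank
  rw [mrk, hmax.csSup_eq, hB.finite.cast_ncard_eq, hB.encard_eq_eRank]

end Matroid

theorem stmt12_general {α : Type*} (A B : Matroid α) [A.Finite]
    (hweak : ∀ I : Set α, B.Indep I → A.Indep I) :
    ∃ C : Matroid α, C.E = A.E ∧
      (∀ F : Set α, C.IsFlat F → A.IsFlat F) ∧
      (∀ I : Set α, B.Indep I → C.Indep I) ∧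
      mrk C C.E = mrk B B.E := by
  have : B.RankFinite := Matroid.rankFinite_of_forall_indep hweak
  have hrkB : (mrk B B.E : ℕ∞) = B.eRank := Matroid.cast_mrk_ground
  refine ⟨A.truncateTo (mrk B B.E), rfl, fun F hF ↦ hF.of_truncateTo, fun I hI ↦ ?_, ?_⟩
  · exact Matroid.truncateTo_indep_iff.2 ⟨hweak I hI, hrkB ▸ hI.encard_le_eRank⟩
  · rw [← ENat.natCast_inj, Matroid.cast_mrk_ground, Matroid.eRank_truncateTo, hrkB]
    exact min_eq_right (Matroid.eRank_le_eRank_of_forall_indep hweak)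

/-- Every weak map of matroids `A → B` decomposes as a strong
map `A → C` followed by a rank-preserving weak map `C → B`. -/
theorem stmt12 {α : Type*} (A B : Matroid α) [A.Finite] [B.Finite]
    (hE : A.E = B.E) (hweak : ∀ I : Set α, B.Indep I → A.Indep I) :
    ∃ C : Matroid α, C.E = A.E ∧
      (∀ F : Set α, C.IsFlat F → A.IsFlat F) ∧
      (∀ I : Set α, B.Indep I → C.Indep I) ∧
      mrk C C.E = mrk B B.E :=
  stmt12_general A B hweak
end

section
/- A flat F of A belongs to the auxiliary pseudo-matroid A' (i.e., rk_B(φ_B(F)) = rk_A(F)) if and only if F contains a subset that is simultaneously a basis of F in A and independent in B. -/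
namespace Matroid

variable {α : Type*} {M N : Matroid α} {I X : Set α}

lemma mrk_eq_ncard_of_isBasis'_s17 (hI : M.IsBasis' I X) (hfin : I.Finite) : mrk M X = I.ncard := by
  refine IsGreatest.csSup_eq ⟨⟨I, hI.indep, hI.subset, rfl⟩, ?_⟩
  rintro n ⟨J, hJ, hJX, rfl⟩
  have hJI : J.encard ≤ I.encard := hI.encard_eq_eRk ▸ hJ.encard_le_eRk_of_subset hJX
  rw [← hfin.cast_ncard_eq, ← (Set.finite_of_encard_le_coe hJI).cast_ncard_eq] at hJI
  exact_mod_cast hJI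

lemma cast_mrk_eq_eRk [M.RankFinite] (X : Set α) : (mrk M X : ℕ∞) = M.eRk X := by
  obtain ⟨I, hI⟩ := M.exists_isBasis' X
  rw [mrk_eq_ncard_of_isBasis'_s17 hI hI.indep.finite, hI.indep.finite.cast_ncard_eq, hI.encard_eq_eRk]

lemma rankFinite_of_forall_indep_imp [M.RankFinite] (hNM : ∀ I, N.Indep I → M.Indep I) :
    N.RankFinite := by
  obtain ⟨B, hB⟩ := N.exists_isBase
  exact hB.rankFinite_of_finite (hNM B hB.indep).finite

lemma eRk_le_eRk_of_forall_indep_imp (hNM : ∀ I, N.Indep I → M.Indep I) (X : Set α) :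
    N.eRk X ≤ M.eRk X :=
  eRk_le_iff.2 fun _ hIX hI ↦ (hNM _ hI).encard_le_eRk_of_subset hIX

lemma eRk_eq_eRk_iff_exists_isBasis_indep (hNM : ∀ I, N.Indep I → M.Indep I)
    (hX : M.IsRkFinite X) (hXE : X ⊆ M.E) :
    N.eRk X = M.eRk X ↔ ∃ I, M.IsBasis I X ∧ N.Indep I := by
  constructor
  · intro h
    obtain ⟨K, hK⟩ := N.exists_isBasis' X
    have hKM : M.Indep K := hNM K hK.indep
    have hKfin : K.Finite := hX.finite_of_indep_subset hKM hK.subset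
    refine ⟨K, hKM.isBasis_of_eRk_ge hKfin hK.subset ?_, hK.indep⟩
    rw [hKM.eRk_eq_encard, hK.encard_eq_eRk, h]
  · rintro ⟨I, hIX, hIN⟩
    refine (eRk_le_eRk_of_forall_indep_imp hNM X).antisymm ?_
    rw [← hIX.encard_eq_eRk]
    exact hIN.encard_le_eRk_of_subset hIX.subset

end Matroid

open Matroid in
theorem stmt17_general {α : Type*} (A B : Matroid α) [A.Finite]
    (hweak : ∀ I : Set α, B.Indep I → A.Indep I)
    (F : Set α) (hF : A.IsFlat F) :
    mrk B (B.closure F) = mrk A F ↔ ∃ I : Set α, I ⊆ F ∧ A.IsBasis I F ∧ B.Indep I := by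
  have := rankFinite_of_forall_indep_imp hweak
  rw [← Nat.cast_inj (R := ℕ∞), cast_mrk_eq_eRk, cast_mrk_eq_eRk, eRk_closure_eq,
    eRk_eq_eRk_iff_exists_isBasis_indep hweak (A.isRkFinite_set F) hF.subset_ground]
  exact ⟨fun ⟨I, hI, hIB⟩ ↦ ⟨I, hI.subset, hI, hIB⟩,
    fun ⟨I, _, hI, hIB⟩ ↦ ⟨I, hI, hIB⟩⟩

/-- A flat `F` of `A` belongs to the auxiliary pseudo-matroid
`A'` (i.e. `rk_B(φ_B(F)) = rk_A(F)`) iff `F` contains a subset that is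
simultaneously a basis of `F` in `A` and independent in `B`. -/
theorem stmt17 {α : Type*} (A B : Matroid α) [A.Finite] [B.Finite]
    (hE : A.E = B.E) (hweak : ∀ I : Set α, B.Indep I → A.Indep I)
    (F : Set α) (hF : A.IsFlat F) :
    mrk B (B.closure F) = mrk A F ↔ ∃ I : Set α, I ⊆ F ∧ A.IsBasis I F ∧ B.Indep I :=
  stmt17_general A B hweak F hF
end

section
/- Let M be a matroid of rank r+1, k[M] the Stanley–Reisner ring of the order complex of its proper lattice of flats, and for i ∈ [r] let θ_i = Σ_{rk F = i} x_F. For S ⊆ [r], a linear functional f = Σ_{fl(C)=S} b_C ε_C on the degree-S component of k[M] annihilates the degree-S component of the ideal (θ_1,...,θ_r) if and only if for every i ∈ S and every chain C' of flag S \ {i}, the sum of b_D over all chains D of flag S containing C' is zero. -/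
open scoped Classical

set_option synthInstance.maxHeartbeats 1000000
set_option maxHeartbeats 1000000

/-- The vertex type of the order complex `Δ(M)`: the flats of `M` other than
the minimal flat and the ground set. -/
def FlatV {α : Type*} (M : Matroid α) : Type _ :=
  {F : Set α // M.IsFlat F ∧ F ≠ M.closure ∅ ∧ F ≠ M.E}

noncomputable instance {α : Type*} [Fintype α] (M : Matroid α) : Fintype (FlatV M) := by
  unfold FlatV; infer_instance

/-- A finite set of proper flats forming a chain (totally ordered by
inclusion), i.e. a face of the order complex `Δ(M)`. -/
def IsChainF {α : Type*} (M : Matroid α) (C : Finset (FlatV M)) : Prop :=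
  ∀ F ∈ C, ∀ G ∈ C, F.1 ⊆ G.1 ∨ G.1 ⊆ F.1

/-- The flag of a chain: the set of ranks of its flats. -/
noncomputable def flagOf {α : Type*} (M : Matroid α) (C : Finset (FlatV M)) : Set ℕ :=
  (fun F : FlatV M => mrk M F.1) '' (C : Set (FlatV M))

/-- The Stanley–Reisner ideal of the order complex of `M`: generated by the
products of variables corresponding to incomparable flats. -/
noncomputable def srMIdeal (k : Type*) [Field k] {α : Type*} [Fintype α] (M : Matroid α) :
    Ideal (MvPolynomial (FlatV M) k) :=
  Ideal.span {p | ∃ F G : FlatV M, ¬(F.1 ⊆ G.1 ∨ G.1 ⊆ F.1) ∧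
    p = MvPolynomial.X F * MvPolynomial.X G}

/-- The Stanley–Reisner ring `k[M]` of the order complex of the proper part of
the lattice of flats of `M`. -/
abbrev SRM (k : Type*) [Field k] {α : Type*} [Fintype α] (M : Matroid α) :=
  MvPolynomial (FlatV M) k ⧸ srMIdeal k M

/-- The (image in `k[M]` of the) squarefree monomial `x_C = ∏_{F ∈ C} x_F`. -/
noncomputable def xC (k : Type*) [Field k] {α : Type*} [Fintype α] (M : Matroid α)
    (C : Finset (FlatV M)) : SRM k M :=
  Ideal.Quotient.mk (srMIdeal k M) (∏ F ∈ C, MvPolynomial.X F)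

/-- `θ_i = ∑_{rk F = i} x_F` in `k[M]`. -/
noncomputable def theta (k : Type*) [Field k] {α : Type*} [Fintype α] (M : Matroid α)
    (i : ℕ) : SRM k M :=
  Ideal.Quotient.mk (srMIdeal k M)
    (∑ F ∈ Finset.univ.filter (fun F : FlatV M => mrk M F.1 = i), MvPolynomial.X F)

/-- The degree-`S` component of `k[M]` (for the fine grading): the span of the
monomials `x_C` over chains `C` of flag `S`. -/
noncomputable def degS (k : Type*) [Field k] {α : Type*} [Fintype α] (M : Matroid α)
    (S : Set ℕ) : Submodule k (SRM k M) :=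
  Submodule.span k
    {x | ∃ C : Finset (FlatV M), IsChainF M C ∧ flagOf M C = S ∧ x = xC k M C}

/-!
Multiplying `x_{C'}`, for a chain `C'` of flag `S \ {i}`, by `θ_i` gives the sum of the `x_D`
over the chains `D ⊇ C'` of flag `S`, because `x_F x_{C'} = 0` unless `C' ∪ {F}` is a chain;
applying `f` to these elements of the ideal gives the forward direction.

Conversely, `f` extends to `ψ = ∑_D b_D · coeff_{x_D}` on the polynomial ring, which kills the
Stanley–Reisner ideal (it only sees chain monomials) and so descends to `k[M]`. The coefficient
of `x_D` in `q θ_i` is the coefficient of `x_{D \ F}` in `q`, where `F` is the rank-`i` flat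
of `D`; regrouping by `C' = D \ F` gives `ψ(q θ_i) = ∑_{C'} coeff_{x_{C'}}(q) ∑_{D ⊇ C'} b_D`,
which vanishes under the hypothesis.
-/

open Finset MvPolynomial

section Rank

variable {α : Type*} [Finite α] {M : Matroid α}

variable (M) in
lemma bddAbove_indep_ncard (X : Set α) :
    BddAbove {n | ∃ I, M.Indep I ∧ I ⊆ X ∧ I.ncard = n} := by
  refine ⟨Nat.card α, ?_⟩
  rintro _ ⟨I, -, -, rfl⟩
  exact (Set.ncard_le_ncard (Set.subset_univ I)).trans (Set.ncard_univ α).le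

variable (M) in
lemma exists_indep_ncard_eq_mrk (X : Set α) : ∃ I, M.Indep I ∧ I ⊆ X ∧ I.ncard = mrk M X :=
  Nat.sSup_mem (s := {n | ∃ I, M.Indep I ∧ I ⊆ X ∧ I.ncard = n})
    ⟨0, ∅, M.empty_indep, Set.empty_subset X, Set.ncard_empty α⟩ (bddAbove_indep_ncard M X)

lemma Matroid.Indep.ncard_le_mrk_s19 {I X : Set α} (hI : M.Indep I) (hIX : I ⊆ X) :
    I.ncard ≤ mrk M X :=
  le_csSup (bddAbove_indep_ncard M X) ⟨I, hI, hIX, rfl⟩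

lemma Matroid.IsFlat.mrk_lt_mrk_of_ssubset {F G : Set α} (hF : M.IsFlat F) (hFG : F ⊂ G)
    (hG : G ⊆ M.E) : mrk M F < mrk M G := by
  obtain ⟨I, hI, hIF, hcard⟩ := exists_indep_ncard_eq_mrk M F
  obtain ⟨e, heG, heF⟩ := Set.exists_of_ssubset hFG
  have heI : e ∉ I := fun h => heF (hIF h)
  have hecl : e ∉ M.closure I := fun h => heF (hF.closure ▸ M.closure_subset_closure hIF h)
  have hins : M.Indep (insert e I) := (hI.insert_indep_iff_of_notMem heI).2 ⟨hG heG, hecl⟩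
  calc mrk M F < (insert e I).ncard := by
        rw [Set.ncard_insert_of_notMem heI, hcard]; exact Nat.lt_succ_self _
    _ ≤ mrk M G := hins.ncard_le_mrk_s19 (Set.insert_subset heG (hIF.trans hFG.subset))

end Rank

section Chains

variable {α : Type*} {M : Matroid α}

lemma FlatV.eq_of_subset_of_mrk_eq [Finite α] {F G : FlatV M} (h : F.1 ⊆ G.1)
    (hr : mrk M F.1 = mrk M G.1) : F = G := by
  by_contra hne
  exact (F.2.1.mrk_lt_mrk_of_ssubset (h.ssubset_of_ne fun h' => hne (Subtype.ext h'))
    G.2.1.subset_ground).ne hr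

lemma IsChainF.subset {C D : Finset (FlatV M)} (hD : IsChainF M D) (h : C ⊆ D) :
    IsChainF M C :=
  fun F hF G hG => hD F (h hF) G (h hG)

lemma IsChainF.injOn_mrk [Finite α] {C : Finset (FlatV M)} (hC : IsChainF M C) :
    Set.InjOn (fun F : FlatV M => mrk M F.1) C := by
  intro F hF G hG h
  rcases hC F hF G hG with hFG | hGF
  · exact FlatV.eq_of_subset_of_mrk_eq hFG h
  · exact (FlatV.eq_of_subset_of_mrk_eq hGF h.symm).symm

lemma mem_flagOf {C : Finset (FlatV M)} {i : ℕ} : i ∈ flagOf M C ↔ ∃ F ∈ C, mrk M F.1 = i := by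
  simp [flagOf]

lemma mrk_mem_flagOf {C : Finset (FlatV M)} {F : FlatV M} (hF : F ∈ C) :
    mrk M F.1 ∈ flagOf M C :=
  mem_flagOf.2 ⟨F, hF, rfl⟩

lemma flagOf_insert (C : Finset (FlatV M)) (F : FlatV M) :
    flagOf M (insert F C) = insert (mrk M F.1) (flagOf M C) := by
  rw [flagOf, coe_insert, Set.image_insert_eq, flagOf]

lemma IsChainF.flagOf_erase [Finite α] {C : Finset (FlatV M)} (hC : IsChainF M C)
    {F : FlatV M} (hF : F ∈ C) : flagOf M (C.erase F) = flagOf M C \ {mrk M F.1} := by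
  rw [flagOf, coe_erase, hC.injOn_mrk.image_sdiff_subset (Set.singleton_subset_iff.2 hF),
    Set.image_singleton, flagOf]

lemma IsChainF.eq_of_subset_of_flagOf_subset [Finite α] {C D : Finset (FlatV M)}
    (hD : IsChainF M D) (hCD : C ⊆ D) (h : flagOf M D ⊆ flagOf M C) : C = D := by
  refine hCD.antisymm fun G hG => ?_
  obtain ⟨H, hH, hHG⟩ := mem_flagOf.1 (h (mrk_mem_flagOf hG))
  rwa [← hD.injOn_mrk (hCD hH) hG hHG]

variable [Fintype α]

variable (M) in
noncomputable def chainsWithFlag (S : Set ℕ) : Finset (Finset (FlatV M)) :=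
  univ.filter fun C => IsChainF M C ∧ flagOf M C = S

@[simp]
lemma mem_chainsWithFlag {S : Set ℕ} {C : Finset (FlatV M)} :
    C ∈ chainsWithFlag M S ↔ IsChainF M C ∧ flagOf M C = S := by
  simp [chainsWithFlag]

lemma finsum_mem_eq_sum_chainsWithFlag {β : Type*} [AddCommMonoid β] (S : Set ℕ)
    (f : Finset (FlatV M) → β) (C' : Finset (FlatV M)) :
    ∑ᶠ D ∈ {D : Finset (FlatV M) | IsChainF M D ∧ flagOf M D = S ∧ C' ⊆ D}, f D =
      ∑ D ∈ (chainsWithFlag M S).filter (C' ⊆ ·), f D := by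
  rw [← finsum_mem_coe_finset]
  congr 1
  ext D
  simp [and_assoc]

variable {S : Set ℕ} {i : ℕ}

lemma notMem_of_mem_chainsWithFlag_sdiff {C' : Finset (FlatV M)}
    (hC' : C' ∈ chainsWithFlag M (S \ {i})) {F : FlatV M} (hF : mrk M F.1 = i) : F ∉ C' := by
  intro hFC'
  have := mrk_mem_flagOf hFC'
  rw [(mem_chainsWithFlag.1 hC').2, hF] at this
  exact this.2 rfl

variable {β : Type*} [AddCommMonoid β] (f : Finset (FlatV M) → β)

lemma sum_insert_eq_sum_chainsWithFlag_supset (hi : i ∈ S) {C' : Finset (FlatV M)}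
    (hC' : C' ∈ chainsWithFlag M (S \ {i})) :
    ∑ F ∈ univ.filter (fun F : FlatV M => mrk M F.1 = i ∧ IsChainF M (insert F C')),
        f (insert F C') =
      ∑ D ∈ (chainsWithFlag M S).filter (C' ⊆ ·), f D := by
  have hflag {F : FlatV M} (hF : mrk M F.1 = i) : flagOf M (insert F C') = S := by
    rw [flagOf_insert, hF, (mem_chainsWithFlag.1 hC').2, Set.insert_sdiff_singleton,
      Set.insert_eq_of_mem hi]
  refine sum_bij (fun F _ => insert F C') ?_ ?_ ?_ fun _ _ => rfl
  · intro F hF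
    simp only [mem_filter, mem_univ, true_and] at hF
    simp [hflag hF.1, hF.2, subset_insert F C']
  · intro F hF G _ h
    exact (insert_inj (notMem_of_mem_chainsWithFlag_sdiff hC' (mem_filter.1 hF).2.1)).1 h
  · intro D hD
    simp only [mem_filter, mem_chainsWithFlag] at hD
    obtain ⟨⟨hDc, hDfl⟩, hC'D⟩ := hD
    obtain ⟨F, hFD, hFi⟩ := mem_flagOf.1 (hDfl ▸ hi)
    have hFC'D : insert F C' = D :=
      hDc.eq_of_subset_of_flagOf_subset (insert_subset hFD hC'D) (by rw [hDfl, hflag hFi])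
    exact ⟨F, by simp [hFi, hFC'D, hDc], hFC'D⟩

lemma sum_erase_eq_sum_chainsWithFlag_subset (hi : i ∈ S) {D : Finset (FlatV M)}
    (hD : D ∈ chainsWithFlag M S) :
    ∑ F ∈ D.filter (fun F => mrk M F.1 = i), f (D.erase F) =
      ∑ C' ∈ (chainsWithFlag M (S \ {i})).filter (· ⊆ D), f C' := by
  obtain ⟨hDc, hDfl⟩ := mem_chainsWithFlag.1 hD
  have hflag {F : FlatV M} (hF : F ∈ D.filter (fun F => mrk M F.1 = i)) :
      flagOf M (D.erase F) = S \ {i} := by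
    rw [mem_filter] at hF
    rw [hDc.flagOf_erase hF.1, hDfl, hF.2]
  refine sum_bij (fun F _ => D.erase F) ?_ ?_ ?_ fun _ _ => rfl
  · intro F hF
    simp [hflag hF, hDc.subset (erase_subset F D), erase_subset F D]
  · intro F hF G _ h
    exact (erase_inj D (mem_filter.1 hF).1).1 h
  · intro C' hC'
    rw [mem_filter] at hC'
    obtain ⟨hC'S, hC'D⟩ := hC'
    obtain ⟨F, hFD, hFi⟩ := mem_flagOf.1 (hDfl ▸ hi)
    have hF : F ∈ D.filter (fun F => mrk M F.1 = i) := mem_filter.2 ⟨hFD, hFi⟩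
    refine ⟨F, hF, ((hDc.subset (erase_subset F D)).eq_of_subset_of_flagOf_subset
      (subset_erase.2 ⟨hC'D, notMem_of_mem_chainsWithFlag_sdiff hC'S hFi⟩) ?_).symm⟩
    rw [hflag hF, (mem_chainsWithFlag.1 hC'S).2]

end Chains

section SquarefreeExponent

variable {σ R : Type*} [DecidableEq σ] [CommSemiring R]

noncomputable def sqfreeExp (C : Finset σ) : σ →₀ ℕ :=
  Multiset.toFinsupp C.val

lemma sqfreeExp_injective : Function.Injective (sqfreeExp (σ := σ)) :=
  Multiset.toFinsupp.injective.comp val_injective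

lemma support_sqfreeExp (C : Finset σ) : (sqfreeExp C).support = C := by
  simp [sqfreeExp]

lemma monomial_sqfreeExp (C : Finset σ) : monomial (sqfreeExp C) (1 : R) = ∏ j ∈ C, X j := by
  rw [monomial_eq, C_1, one_mul, Finsupp.prod, support_sqfreeExp]
  refine prod_congr rfl fun j hj => ?_
  rw [sqfreeExp, Multiset.toFinsupp_apply, Multiset.count_eq_one_of_mem C.nodup hj, pow_one]

lemma sqfreeExp_eq_single_add_erase {C : Finset σ} {j : σ} (hj : j ∈ C) :
    sqfreeExp C = Finsupp.single j 1 + sqfreeExp (C.erase j) := by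
  rw [sqfreeExp, sqfreeExp, ← Multiset.toFinsupp_singleton, ← Multiset.toFinsupp_add,
    Multiset.singleton_add, erase_val, Multiset.cons_erase (mem_val.mpr hj)]

lemma coeff_sqfreeExp_mul_X (C : Finset σ) (j : σ) (p : MvPolynomial σ R) :
    coeff (sqfreeExp C) (p * X j) = if j ∈ C then coeff (sqfreeExp (C.erase j)) p else 0 := by
  rw [coeff_mul_X', support_sqfreeExp]
  split_ifs with hj
  · rw [sqfreeExp_eq_single_add_erase hj, add_tsub_cancel_left]
  · rfl

end SquarefreeExponent

lemma map_eq_zero_of_mem_ideal_span {A N F : Type*} [CommSemiring A] [AddCommMonoid N]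
    [FunLike F A N] [AddMonoidHomClass F A N] (ψ : F) {s : Set A}
    (hs : ∀ a ∈ s, ∀ q, ψ (q * a) = 0) {x : A} (hx : x ∈ Ideal.span s) : ψ x = 0 := by
  suffices ∀ q, ψ (q * x) = 0 by simpa using this 1
  induction hx using Submodule.span_induction with
  | mem a ha => exact hs a ha
  | zero => simp
  | add y z _ _ hy hz => intro q; rw [mul_add, map_add, hy, hz, add_zero]
  | smul a y _ hy => intro q; rw [smul_eq_mul, ← mul_assoc]; exact hy _

section StanleyReisner

variable {k : Type*} [Field k] {α : Type*} [Fintype α] {M : Matroid α} {S : Set ℕ} {i : ℕ}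

lemma xC_eq_zero_of_not_isChainF {C : Finset (FlatV M)} (hC : ¬IsChainF M C) :
    xC k M C = 0 := by
  simp only [IsChainF, not_forall] at hC
  obtain ⟨F, hF, G, hG, hFG⟩ := hC
  have hne : F ≠ G := by rintro rfl; exact hFG (Or.inl subset_rfl)
  refine Ideal.Quotient.eq_zero_iff_mem.2
    (Ideal.mem_of_dvd _ ?_ (Ideal.subset_span ⟨F, G, hFG, rfl⟩))
  rw [← prod_pair hne]
  exact prod_dvd_prod_of_subset _ _ _ (insert_subset hF (singleton_subset_iff.2 hG))

lemma xC_mem_degS {C : Finset (FlatV M)} (hC : C ∈ chainsWithFlag M S) : xC k M C ∈ degS k M S :=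
  Submodule.subset_span ⟨C, (mem_chainsWithFlag.1 hC).1, (mem_chainsWithFlag.1 hC).2, rfl⟩

lemma theta_mul_xC (hi : i ∈ S) {C' : Finset (FlatV M)} (hC' : C' ∈ chainsWithFlag M (S \ {i})) :
    theta k M i * xC k M C' = ∑ D ∈ (chainsWithFlag M S).filter (C' ⊆ ·), xC k M D := by
  calc theta k M i * xC k M C'
      = ∑ F ∈ univ.filter (fun F : FlatV M => mrk M F.1 = i), xC k M (insert F C') := by
        rw [theta, xC, ← map_mul, sum_mul, map_sum]
        refine sum_congr rfl fun F hF => ?_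
        rw [xC, prod_insert (notMem_of_mem_chainsWithFlag_sdiff hC' (mem_filter.1 hF).2)]
    _ = ∑ F ∈ univ.filter (fun F : FlatV M => mrk M F.1 = i ∧ IsChainF M (insert F C')),
          xC k M (insert F C') := by
        rw [← filter_filter,
          sum_filter_of_ne fun F _ h => not_not.1 (mt xC_eq_zero_of_not_isChainF h)]
    _ = _ := sum_insert_eq_sum_chainsWithFlag_supset _ hi hC'

end StanleyReisner

section ChainFunctional

variable {k : Type*} [Field k] {α : Type*} [Fintype α] {M : Matroid α} {S : Set ℕ}
  {b : Finset (FlatV M) → k}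

variable (M) in
noncomputable def chainCoeffFunctional (S : Set ℕ) (b : Finset (FlatV M) → k) :
    MvPolynomial (FlatV M) k →ₗ[k] k :=
  ∑ C ∈ chainsWithFlag M S, b C • lcoeff k (sqfreeExp C)

lemma chainCoeffFunctional_apply (p : MvPolynomial (FlatV M) k) :
    chainCoeffFunctional M S b p = ∑ C ∈ chainsWithFlag M S, b C * coeff (sqfreeExp C) p := by
  simp [chainCoeffFunctional]

lemma chainCoeffFunctional_eq_zero_of_mem {p : MvPolynomial (FlatV M) k}
    (hp : p ∈ srMIdeal k M) : chainCoeffFunctional M S b p = 0 := by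
  refine map_eq_zero_of_mem_ideal_span _ ?_ hp
  rintro _ ⟨F, G, hFG, rfl⟩ q
  rw [chainCoeffFunctional_apply]
  refine sum_eq_zero fun C hC => ?_
  rw [← mul_assoc, coeff_sqfreeExp_mul_X, coeff_sqfreeExp_mul_X]
  split_ifs with hG hF
  · exact absurd ((mem_chainsWithFlag.1 hC).1 F (mem_of_mem_erase hF) G hG) hFG
  all_goals exact mul_zero _

variable (M) in
noncomputable def chainFunctional (S : Set ℕ) (b : Finset (FlatV M) → k) : SRM k M →ₗ[k] k :=
  ((srMIdeal k M).restrictScalars k).liftQ (chainCoeffFunctional M S b)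
      (fun _ hp => chainCoeffFunctional_eq_zero_of_mem hp) ∘ₗ
    (Submodule.Quotient.restrictScalarsEquiv k (srMIdeal k M)).symm.toLinearMap

lemma chainFunctional_mk (p : MvPolynomial (FlatV M) k) :
    chainFunctional M S b (Ideal.Quotient.mk _ p) = chainCoeffFunctional M S b p :=
  rfl

lemma chainFunctional_xC {C : Finset (FlatV M)} (hC : C ∈ chainsWithFlag M S) :
    chainFunctional M S b (xC k M C) = b C := by
  rw [xC, chainFunctional_mk, ← monomial_sqfreeExp, chainCoeffFunctional_apply,
    sum_eq_single_of_mem C hC, coeff_monomial, if_pos rfl, mul_one]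
  intro D _ hDC
  rw [coeff_monomial, if_neg (sqfreeExp_injective.ne (Ne.symm hDC)), mul_zero]

lemma chainCoeffFunctional_mul_theta (q : MvPolynomial (FlatV M) k) (i : ℕ) :
    chainCoeffFunctional M S b
        (q * ∑ F ∈ univ.filter (fun F : FlatV M => mrk M F.1 = i), X F) =
      ∑ D ∈ chainsWithFlag M S, ∑ F ∈ D.filter (fun F => mrk M F.1 = i),
        b D * coeff (sqfreeExp (D.erase F)) q := by
  rw [chainCoeffFunctional_apply]
  refine sum_congr rfl fun D _ => ?_
  simp only [mul_sum, coeff_sum, coeff_sqfreeExp_mul_X, mul_ite, mul_zero]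
  rw [sum_ite_mem, filter_inter, univ_inter]

lemma chainFunctional_mul_theta_eq_zero
    (hb : ∀ i ∈ S, ∀ C' ∈ chainsWithFlag M (S \ {i}),
      ∑ D ∈ (chainsWithFlag M S).filter (C' ⊆ ·), b D = 0)
    (z : SRM k M) (i : ℕ) : chainFunctional M S b (z * theta k M i) = 0 := by
  obtain ⟨q, rfl⟩ := Ideal.Quotient.mk_surjective z
  rw [theta, ← map_mul, chainFunctional_mk, chainCoeffFunctional_mul_theta]
  by_cases hi : i ∈ S
  · calc _ = ∑ D ∈ chainsWithFlag M S, ∑ C' ∈ (chainsWithFlag M (S \ {i})).filter (· ⊆ D),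
              b D * coeff (sqfreeExp C') q :=
          sum_congr rfl fun D hD => sum_erase_eq_sum_chainsWithFlag_subset _ hi hD
      _ = ∑ C' ∈ chainsWithFlag M (S \ {i}), ∑ D ∈ (chainsWithFlag M S).filter (C' ⊆ ·),
              b D * coeff (sqfreeExp C') q :=
          sum_comm' fun D C' => by simp only [mem_filter]; tauto
      _ = 0 := sum_eq_zero fun C' hC' => by rw [← sum_mul, hb i hi C' hC', zero_mul]
  · refine sum_eq_zero fun D hD => sum_eq_zero fun F hF => ?_
    have hiD := mrk_mem_flagOf (mem_filter.1 hF).1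
    rw [(mem_filter.1 hF).2, (mem_chainsWithFlag.1 hD).2] at hiD
    exact absurd hiD hi

lemma chainFunctional_eq_zero_of_mem_span_theta
    (hb : ∀ i ∈ S, ∀ C' ∈ chainsWithFlag M (S \ {i}),
      ∑ D ∈ (chainsWithFlag M S).filter (C' ⊆ ·), b D = 0)
    {x : SRM k M} (hx : x ∈ Ideal.span (Set.range (theta k M))) :
    chainFunctional M S b x = 0 :=
  map_eq_zero_of_mem_ideal_span _
    (by rintro _ ⟨i, rfl⟩ z; exact chainFunctional_mul_theta_eq_zero hb z i) hx

lemma eq_chainFunctional_of_mem_degS {φ : SRM k M →ₗ[k] k}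
    (hφ : ∀ C : Finset (FlatV M), IsChainF M C → flagOf M C = S → φ (xC k M C) = b C)
    {x : SRM k M} (hx : x ∈ degS k M S) : φ x = chainFunctional M S b x :=
  LinearMap.eqOn_span (by
    rintro _ ⟨C, hC, hfl, rfl⟩
    rw [hφ C hC hfl, chainFunctional_xC (mem_chainsWithFlag.2 ⟨hC, hfl⟩)]) hx

end ChainFunctional

theorem stmt19_general {k : Type*} [Field k] {α : Type*} [Fintype α] (M : Matroid α)
    {r : ℕ} (S : Set ℕ) (hS : S ⊆ Set.Icc 1 r)
    (b : Finset (FlatV M) → k) (φ : SRM k M →ₗ[k] k)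
    (hφ : ∀ C : Finset (FlatV M), IsChainF M C → flagOf M C = S →
      φ (xC k M C) = b C) :
    (∀ x ∈ Ideal.span {p : SRM k M | ∃ i ∈ Set.Icc 1 r, p = theta k M i},
        x ∈ degS k M S → φ x = 0) ↔
    (∀ i ∈ S, ∀ C' : Finset (FlatV M), IsChainF M C' → flagOf M C' = S \ {i} →
        ∑ᶠ D ∈ {D : Finset (FlatV M) | IsChainF M D ∧ flagOf M D = S ∧ C' ⊆ D},
          b D = 0) := by
  simp only [finsum_mem_eq_sum_chainsWithFlag]
  constructor
  · intro hφI i hi C' hC' hfl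
    have hC'S : C' ∈ chainsWithFlag M (S \ {i}) := mem_chainsWithFlag.2 ⟨hC', hfl⟩
    have hθx : theta k M i * xC k M C' ∈ degS k M S := by
      rw [theta_mul_xC hi hC'S]
      exact Submodule.sum_mem _ fun D hD => xC_mem_degS (mem_filter.1 hD).1
    calc ∑ D ∈ (chainsWithFlag M S).filter (C' ⊆ ·), b D
        = φ (theta k M i * xC k M C') := by
          rw [theta_mul_xC hi hC'S, map_sum]
          refine sum_congr rfl fun D hD => ?_
          obtain ⟨hDc, hDfl⟩ := mem_chainsWithFlag.1 (mem_filter.1 hD).1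
          exact (hφ D hDc hDfl).symm
      _ = 0 := hφI _ (Ideal.mul_mem_right _ _ (Ideal.subset_span ⟨i, hS hi, rfl⟩)) hθx
  · intro hb x hx hxS
    rw [eq_chainFunctional_of_mem_degS hφ hxS]
    refine chainFunctional_eq_zero_of_mem_span_theta
      (fun i hi C' hC' => hb i hi C' (mem_chainsWithFlag.1 hC').1 (mem_chainsWithFlag.1 hC').2)
      (Ideal.span_mono ?_ hx)
    rintro _ ⟨i, -, rfl⟩
    exact ⟨i, rfl⟩

/-- Let `M` be a matroid of rank `r+1` and `S ⊆ [r]`. A linear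
functional `f = ∑_{fl(C)=S} b_C ε_C` on the degree-`S` component of `k[M]`
annihilates the degree-`S` component of the ideal `(θ_1, …, θ_r)` iff for every
`i ∈ S` and every chain `C'` of flag `S \ {i}`, the sum of `b_D` over all
chains `D` of flag `S` containing `C'` vanishes. -/
theorem stmt19 {k : Type*} [Field k] {α : Type*} [Fintype α] (M : Matroid α)
    {r : ℕ} (hrk : mrk M M.E = r + 1) (S : Set ℕ) (hS : S ⊆ Set.Icc 1 r)
    (b : Finset (FlatV M) → k) (φ : SRM k M →ₗ[k] k)
    (hφ : ∀ C : Finset (FlatV M), IsChainF M C → flagOf M C = S →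
      φ (xC k M C) = b C) :
    (∀ x ∈ Ideal.span {p : SRM k M | ∃ i ∈ Set.Icc 1 r, p = theta k M i},
        x ∈ degS k M S → φ x = 0) ↔
    (∀ i ∈ S, ∀ C' : Finset (FlatV M), IsChainF M C' → flagOf M C' = S \ {i} →
        ∑ᶠ D ∈ {D : Finset (FlatV M) | IsChainF M D ∧ flagOf M D = S ∧ C' ⊆ D},
          b D = 0) :=
  stmt19_general M S hS b φ hφ
end
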